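/- Let n = 2m+1, let R_n be the dihedral quandle of order n, and let D(R_n) be its symmetric double. The quotient set D(R_n) ⊗ D(R_n) / ⟨τ⟩ has exactly 3(m+1) elements, namely {E(k)^{+,+}}, {E(k)^{−,−}}, and {E(k)^{+,−}, E(k)^{−,+}} for k = 0, 1, …, m, where E(k)^{ε,δ} = {(i, i+k)^{ε,δ}, (i, i−k)^{ε,δ} : i ∈ ℤ/nℤ}. -/
import Mathlib


/-- A quandle: a set with two binary operations `op` (`∗`) and `inv` (`∗̄`)
satisfying (Q1), (Q2), (Q3). -/
structure QuandleStr (X : Type) where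
  op : X → X → X
  inv : X → X → X
  q1 : ∀ x, op x x = x
  q2a : ∀ x y, inv (op x y) y = x
  q2b : ∀ x y, op (inv x y) y = x
  q3 : ∀ x y z, op (op x y) z = op (op x z) (op y z)

namespace QuandleStr

variable {X Y : Type} (Q : QuandleStr X)

lemma inv_self (x : X) : Q.inv x x = x := by
  have h := Q.q2a x x
  rwa [Q.q1] at h

lemma op_right_cancel {a b : X} (z : X) (h : Q.op a z = Q.op b z) : a = b := by
  have h2 := congrArg (fun t => Q.inv t z) h
  simpa [Q.q2a] using h2

lemma distA (x y z : X) : Q.inv (Q.op x y) z = Q.op (Q.inv x z) (Q.inv y z) := by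
  apply Q.op_right_cancel z
  rw [Q.q2b, Q.q3, Q.q2b, Q.q2b]

lemma distB (x y z : X) : Q.op (Q.inv x y) z = Q.inv (Q.op x z) (Q.op y z) := by
  have h : Q.op (Q.op (Q.inv x y) y) z = Q.op (Q.op (Q.inv x y) z) (Q.op y z) := Q.q3 _ _ _
  rw [Q.q2b] at h
  have h2 := congrArg (fun t => Q.inv t (Q.op y z)) h
  simpa [Q.q2a] using h2.symm

lemma distD (x y z : X) : Q.inv (Q.inv x y) z = Q.inv (Q.inv x z) (Q.inv y z) := by
  apply Q.op_right_cancel z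
  rw [Q.q2b, Q.distB, Q.q2b, Q.q2b]

/-- One step of the relation generating the tensor product:
`(x₁, x₂) ≈ (x₁ ∗ z, x₂ ∗ z)`. -/
def tensorStep (p q : X × X) : Prop :=
  ∃ z, q = (Q.op p.1 z, Q.op p.2 z)

/-- The equivalence relation `≈` defining the tensor product `X ⊗ X`:
the equivalence relation generated by `(x₁, x₂) ≈ (x₁ ∗ z, x₂ ∗ z)`. -/
def tensorEqv : X × X → X × X → Prop :=
  Relation.EqvGen Q.tensorStep

/-- The tensor product `X ⊗ X` of a quandle. -/
def Tensor : Type :=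
  Quotient (Relation.EqvGen.setoid Q.tensorStep)

/-- The symmetric double `D(X)` of a quandle, realized on `X × Bool`
(`(x, true)` is `x⁺` and `(x, false)` is `x⁻`), with
`x^ε ∗ y⁺ = (x∗y)^ε`, `x^ε ∗ y⁻ = (x∗̄y)^ε`, `x^ε ∗̄ y⁺ = (x∗̄y)^ε`,
`x^ε ∗̄ y⁻ = (x∗y)^ε`. -/
def double : QuandleStr (X × Bool) where
  op a b := (if b.2 then Q.op a.1 b.1 else Q.inv a.1 b.1, a.2)
  inv a b := (if b.2 then Q.inv a.1 b.1 else Q.op a.1 b.1, a.2)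
  q1 := by rintro ⟨x, ε⟩; cases ε <;> simp [Q.q1, Q.inv_self]
  q2a := by rintro ⟨x, ε⟩ ⟨y, δ⟩; cases δ <;> simp [Q.q2a, Q.q2b]
  q2b := by rintro ⟨x, ε⟩ ⟨y, δ⟩; cases δ <;> simp [Q.q2a, Q.q2b]
  q3 := by
    rintro ⟨x, ε⟩ ⟨y, δ⟩ ⟨z, γ⟩
    cases δ <;> cases γ
    · show (Q.inv (Q.inv x y) z, ε) = (Q.inv (Q.inv x z) (Q.inv y z), ε)
      rw [Q.distD]
    · show (Q.op (Q.inv x y) z, ε) = (Q.inv (Q.op x z) (Q.op y z), ε)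
      rw [Q.distB]
    · show (Q.inv (Q.op x y) z, ε) = (Q.op (Q.inv x z) (Q.inv y z), ε)
      rw [Q.distA]
    · show (Q.op (Q.op x y) z, ε) = (Q.op (Q.op x z) (Q.op y z), ε)
      rw [Q.q3]

/-- The equivalence relation generated by `≈` and the swap `τ`. -/
def tensorTauEqv : X × X → X × X → Prop :=
  Relation.EqvGen (fun p q => Q.tensorStep p q ∨ q = p.swap)

/-- The quotient `X ⊗ X / ⟨τ⟩`. -/
def TensorTau : Type :=
  Quotient (Relation.EqvGen.setoid (fun p q => Q.tensorStep p q ∨ q = p.swap))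

/-- The equivalence relation generated by `≈` and `(x₁, x₂) ↦ (ρ(x₁), ρ(x₂))`
for an involution `r` of `X`. -/
def tensorRhoEqv (r : X → X) : X × X → X × X → Prop :=
  Relation.EqvGen (fun p q => Q.tensorStep p q ∨ q = (r p.1, r p.2))

/-- The quotient `X ⊗ X / ⟨ρ⟩`. -/
def TensorRho (r : X → X) : Type :=
  Quotient (Relation.EqvGen.setoid (fun p q => Q.tensorStep p q ∨ q = (r p.1, r p.2)))

/-- The equivalence relation generated by `≈`, `τ` and `ρ`. -/
def tensorTauRhoEqv (r : X → X) : X × X → X × X → Prop :=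
  Relation.EqvGen (fun p q => Q.tensorStep p q ∨ q = p.swap ∨ q = (r p.1, r p.2))

/-- The quotient `X ⊗ X / ⟨τ, ρ⟩`. -/
def TensorTauRho (r : X → X) : Type :=
  Quotient (Relation.EqvGen.setoid
    (fun p q => Q.tensorStep p q ∨ q = p.swap ∨ q = (r p.1, r p.2)))

end QuandleStr

/-- The good involution `ρ` on the symmetric double `D(X) = X × Bool`,
exchanging `x⁺` and `x⁻`. -/
def doubleRho {X : Type} : X × Bool → X × Bool := fun a => (a.1, !a.2)

/-- The dihedral quandle `R_n` of order `n`: `ℤ/nℤ` with `x ∗ y = x ∗̄ y = 2y − x`. -/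
def dihedral (n : ℕ) : QuandleStr (ZMod n) where
  op x y := 2 * y - x
  inv x y := 2 * y - x
  q1 := by intro x; ring
  q2a := by intro x y; ring
  q2b := by intro x y; ring
  q3 := by intro x y z; ring

/-- The distance `d_n` on `ℤ/nℤ`:
`d_n(x, y) = min {|a − b| : a, b ∈ ℤ, a ≡ x, b ≡ y (mod n)}`. -/
noncomputable def ddist (n : ℕ) (x y : ZMod n) : ℕ :=
  sInf {d : ℕ | ∃ a b : ℤ, (a : ZMod n) = x ∧ (b : ZMod n) = y ∧ (a - b).natAbs = d}

/-- `x ∈ ℤ/nℤ` is represented by an even integer. -/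
def isEvenClass (n : ℕ) (x : ZMod n) : Prop :=
  ∃ a : ℤ, Even a ∧ (a : ZMod n) = x

/-- `x ∈ ℤ/nℤ` is represented by an odd integer. -/
def isOddClass (n : ℕ) (x : ZMod n) : Prop :=
  ∃ a : ℤ, Odd a ∧ (a : ZMod n) = x

/-- `E(k)^{ε,δ} = {(i, i+k)^{ε,δ}, (i, i−k)^{ε,δ} : i ∈ ℤ/nℤ}`. -/
def EsetD (n k : ℕ) (ε δ : Bool) : Set ((ZMod n × Bool) × (ZMod n × Bool)) :=
  {p | ∃ i : ZMod n,
    p = ((i, ε), (i + (k : ZMod n), δ)) ∨ p = ((i, ε), (i - (k : ZMod n), δ))}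

section Statement11Aux

variable {m : ℕ}

/-- The ambient set for pairs in the double of the dihedral quandle. -/
abbrev DPair (m : ℕ) := (ZMod (2 * m + 1) × Bool) × (ZMod (2 * m + 1) × Bool)

/-- The invariant relation characterizing `tensorTauEqv` for the double dihedral quandle. -/
def Pinv (m : ℕ) (p q : DPair m) : Prop :=
  ((q.1.2 = p.1.2 ∧ q.2.2 = p.2.2) ∨ (q.1.2 = p.2.2 ∧ q.2.2 = p.1.2)) ∧
    (q.2.1 - q.1.1 = p.2.1 - p.1.1 ∨ q.2.1 - q.1.1 = -(p.2.1 - p.1.1))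

lemma Pinv.refl (p : DPair m) : Pinv m p p := ⟨Or.inl ⟨rfl, rfl⟩, Or.inl rfl⟩

lemma Pinv.symm {p q : DPair m} (h : Pinv m p q) : Pinv m q p := by
  obtain ⟨hs, hd⟩ := h
  refine ⟨by tauto, ?_⟩
  rcases hd with h | h
  · exact Or.inl h.symm
  · exact Or.inr (by rw [h, neg_neg])

lemma Pinv.trans {p q r : DPair m} (h1 : Pinv m p q) (h2 : Pinv m q r) : Pinv m p r := by
  obtain ⟨hs1, hd1⟩ := h1
  obtain ⟨hs2, hd2⟩ := h2
  refine ⟨?_, ?_⟩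
  · rcases hs1 with ⟨h1, h2⟩ | ⟨h1, h2⟩ <;> rcases hs2 with ⟨h3, h4⟩ | ⟨h3, h4⟩
    · exact Or.inl ⟨h3.trans h1, h4.trans h2⟩
    · exact Or.inr ⟨h3.trans h2, h4.trans h1⟩
    · exact Or.inr ⟨h3.trans h1, h4.trans h2⟩
    · exact Or.inl ⟨h3.trans h2, h4.trans h1⟩
  rcases hd1 with h | h <;> rcases hd2 with h' | h'
  · exact Or.inl (h'.trans h)
  · exact Or.inr (by rw [h', h])
  · exact Or.inr (by rw [h', h])
  · exact Or.inl (by rw [h', h, neg_neg])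

lemma tensorStep_iff (p q : DPair m) :
    ((dihedral (2 * m + 1)).double).tensorStep p q ↔
      ∃ c : ZMod (2 * m + 1), q = ((2 * c - p.1.1, p.1.2), (2 * c - p.2.1, p.2.2)) := by
  constructor
  · rintro ⟨z, rfl⟩
    exact ⟨z.1, by simp [QuandleStr.double, dihedral]⟩
  · rintro ⟨c, rfl⟩
    exact ⟨(c, true), by simp [QuandleStr.double, dihedral]⟩

lemma key_two_mul (m : ℕ) : (2 : ZMod (2 * m + 1)) * ((m : ZMod (2 * m + 1)) + 1) = 1 := by
  have h0 : ((2 * m + 1 : ℕ) : ZMod (2 * m + 1)) = 0 := ZMod.natCast_self _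
  push_cast at h0
  linear_combination h0

/-- abbreviation for the equivalence -/
abbrev DEqv (m : ℕ) (p q : DPair m) : Prop :=
  ((dihedral (2 * m + 1)).double).tensorTauEqv p q

lemma step_eqv (p : DPair m) (c : ZMod (2 * m + 1)) :
    DEqv m p ((2 * c - p.1.1, p.1.2), (2 * c - p.2.1, p.2.2)) :=
  Relation.EqvGen.rel _ _ (Or.inl ((tensorStep_iff p _).2 ⟨c, rfl⟩))

lemma step_eqv' (x y : ZMod (2 * m + 1)) (ε δ : Bool) (c : ZMod (2 * m + 1)) :
    DEqv m ((x, ε), (y, δ)) ((2 * c - x, ε), (2 * c - y, δ)) :=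
  step_eqv ((x, ε), (y, δ)) c

lemma eqv_of_diff (x y x' y' : ZMod (2 * m + 1)) (ε δ : Bool)
    (h : y' - x' = y - x ∨ y' - x' = -(y - x)) :
    DEqv m ((x, ε), (y, δ)) ((x', ε), (y', δ)) := by
  have key := key_two_mul m
  rcases h with h | h
  · -- two steps: c₁ = 0 then c₂ = (m+1)*(x'-x)
    have h1 := step_eqv' x y ε δ 0
    have h2 := step_eqv' (2 * 0 - x) (2 * 0 - y) ε δ (((m : ZMod (2*m+1)) + 1) * (x' - x))
    have e1 : 2 * (((m : ZMod (2*m+1)) + 1) * (x' - x)) - (2 * 0 - x) = x' := by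
      linear_combination (x' - x) * key
    have e2 : 2 * (((m : ZMod (2*m+1)) + 1) * (x' - x)) - (2 * 0 - y) = y' := by
      linear_combination (x' - x) * key - h
    rw [e1, e2] at h2
    exact h1.trans _ _ _ h2
  · -- one step with 2c = x + x'
    have h1 := step_eqv' x y ε δ (((m : ZMod (2*m+1)) + 1) * (x + x'))
    have e1 : 2 * (((m : ZMod (2*m+1)) + 1) * (x + x')) - x = x' := by
      linear_combination (x + x') * key
    have e2 : 2 * (((m : ZMod (2*m+1)) + 1) * (x + x')) - y = y' := by
      linear_combination (x + x') * key - h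
    rw [e1, e2] at h1
    exact h1

lemma eqv_iff_Pinv (p q : DPair m) : DEqv m p q ↔ Pinv m p q := by
  constructor
  · intro h
    induction h with
    | rel a b hab =>
      rcases hab with hs | hs
      · obtain ⟨c, rfl⟩ := (tensorStep_iff a b).1 hs
        exact ⟨Or.inl ⟨rfl, rfl⟩, Or.inr (by ring)⟩
      · subst hs
        exact ⟨Or.inr ⟨rfl, rfl⟩, Or.inr (by simp)⟩
    | refl a => exact Pinv.refl a
    | symm a b _ ih => exact ih.symm
    | trans a b c _ _ ih1 ih2 => exact ih1.trans ih2
  · obtain ⟨⟨x, ε⟩, ⟨y, δ⟩⟩ := p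
    obtain ⟨⟨x', ε'⟩, ⟨y', δ'⟩⟩ := q
    rintro ⟨hs, hd⟩
    simp only at hs hd
    rcases hs with ⟨h1, h2⟩ | ⟨h1, h2⟩
    · rw [h1, h2]
      exact eqv_of_diff x y x' y' _ _ hd
    · have hswap : DEqv m ((x, ε), (y, δ)) ((y, δ), (x, ε)) :=
        Relation.EqvGen.rel _ _ (Or.inr rfl)
      rw [h1, h2]
      refine hswap.trans _ _ _ (eqv_of_diff y x x' y' _ _ ?_)
      rcases hd with h | h
      · exact Or.inr (by rw [h]; ring)
      · exact Or.inl (by rw [h]; ring)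

lemma mem_EsetD (k : ℕ) (ε δ : Bool) (q : DPair m) :
    q ∈ EsetD (2 * m + 1) k ε δ ↔
      q.1.2 = ε ∧ q.2.2 = δ ∧
        (q.2.1 - q.1.1 = (k : ZMod (2 * m + 1)) ∨ q.2.1 - q.1.1 = -(k : ZMod (2 * m + 1))) := by
  obtain ⟨⟨a, b⟩, ⟨c, e⟩⟩ := q
  simp only [EsetD, Set.mem_setOf_eq, Prod.mk.injEq]
  constructor
  · rintro ⟨i, ⟨⟨rfl, rfl⟩, ⟨rfl, rfl⟩⟩ | ⟨⟨rfl, rfl⟩, ⟨rfl, rfl⟩⟩⟩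
    · exact ⟨rfl, rfl, Or.inl (by ring)⟩
    · exact ⟨rfl, rfl, Or.inr (by ring)⟩
  · rintro ⟨rfl, rfl, hd | hd⟩
    · exact ⟨a, Or.inl ⟨⟨rfl, rfl⟩, ⟨by linear_combination hd, rfl⟩⟩⟩
    · exact ⟨a, Or.inr ⟨⟨rfl, rfl⟩, ⟨by linear_combination hd, rfl⟩⟩⟩

lemma pm_iff {n : ℕ} (a b c : ZMod n) (h : c = b ∨ c = -b) :
    (a = b ∨ a = -b) ↔ (a = c ∨ a = -c) := by
  rcases h with rfl | rfl
  · tauto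
  · constructor <;> rintro (rfl | rfl) <;> simp [neg_neg]

lemma class_eq (x y : ZMod (2 * m + 1)) (ε δ : Bool) (k : ℕ)
    (hk : (k : ZMod (2 * m + 1)) = y - x ∨ (k : ZMod (2 * m + 1)) = -(y - x)) :
    {q | DEqv m ((x, ε), (y, δ)) q} =
      EsetD (2 * m + 1) k ε δ ∪ EsetD (2 * m + 1) k δ ε := by
  ext q
  rw [Set.mem_setOf_eq, eqv_iff_Pinv, Set.mem_union, mem_EsetD, mem_EsetD]
  have hpm := pm_iff (q.2.1 - q.1.1) (y - x) (k : ZMod (2 * m + 1)) hk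
  unfold Pinv
  simp only
  rw [hpm]
  tauto

/-- canonical representative `k ∈ {0, …, m}` of `±d`. -/
def kcan (m : ℕ) (d : ZMod (2 * m + 1)) : ℕ :=
  if d.val ≤ m then d.val else 2 * m + 1 - d.val

lemma kcan_le (d : ZMod (2 * m + 1)) : kcan m d ≤ m := by
  have hv : d.val < 2 * m + 1 := d.val_lt
  unfold kcan
  split <;> omega

lemma val_cast_eq (d : ZMod (2 * m + 1)) : ((d.val : ℕ) : ZMod (2 * m + 1)) = d := by
  simp [ZMod.natCast_val, ZMod.cast_id]

lemma kcan_spec (d : ZMod (2 * m + 1)) :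
    ((kcan m d : ℕ) : ZMod (2 * m + 1)) = d ∨ ((kcan m d : ℕ) : ZMod (2 * m + 1)) = -d := by
  unfold kcan
  split
  · exact Or.inl (val_cast_eq d)
  · right
    have hv : d.val < 2 * m + 1 := d.val_lt
    have : ((2 * m + 1 - d.val : ℕ) : ZMod (2 * m + 1)) =
        ((2 * m + 1 : ℕ) : ZMod (2 * m + 1)) - ((d.val : ℕ) : ZMod (2 * m + 1)) := by
      push_cast [Nat.cast_sub hv.le]
      ring
    rw [this, ZMod.natCast_self, val_cast_eq, zero_sub]

lemma kcan_cast {k : ℕ} (hk : k ≤ m) : kcan m ((k : ZMod (2 * m + 1))) = k := by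
  have hv : ((k : ZMod (2 * m + 1))).val = k := ZMod.val_cast_of_lt (by omega)
  unfold kcan
  rw [hv]
  simp [hk]

lemma kcan_neg (d : ZMod (2 * m + 1)) : kcan m (-d) = kcan m d := by
  by_cases h0 : d = 0
  · subst h0; simp
  · have hneg : (-d).val = 2 * m + 1 - d.val := by rw [ZMod.neg_val, if_neg h0]
    have hv : d.val < 2 * m + 1 := d.val_lt
    have hv0 : d.val ≠ 0 := fun h => h0 (by rw [← val_cast_eq d, h]; simp)
    unfold kcan
    rw [hneg]
    split <;> split <;> omega

lemma kcan_eq_of_pm {d d' : ZMod (2 * m + 1)} (h : d' = d ∨ d' = -d) :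
    kcan m d' = kcan m d := by
  rcases h with rfl | rfl
  · rfl
  · exact kcan_neg d

end Statement11Aux
section Statement11Count

variable {m : ℕ}

/-- sign class: `(+,+) ↦ 0`, `(−,−) ↦ 1`, mixed `↦ 2`. -/
def sgn (b1 b2 : Bool) : Fin 3 :=
  if b1 && b2 then 0 else if !b1 && !b2 then 1 else 2

/-- representative sign pair of a sign class. -/
def sgp : Fin 3 → Bool × Bool
  | 0 => (true, true)
  | 1 => (false, false)
  | 2 => (true, false)

lemma sgn_sgp (j : Fin 3) : sgn (sgp j).1 (sgp j).2 = j := by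
  fin_cases j <;> rfl

lemma sgn_comm (b1 b2 : Bool) : sgn b1 b2 = sgn b2 b1 := by
  cases b1 <;> cases b2 <;> rfl

/-- The complete invariant of a pair. -/
def classIdx (m : ℕ) (p : DPair m) : Fin (m + 1) × Fin 3 :=
  (⟨kcan m (p.2.1 - p.1.1), Nat.lt_succ_of_le (kcan_le _)⟩, sgn p.1.2 p.2.2)

lemma classIdx_eq_of_Pinv {p q : DPair m} (h : Pinv m p q) : classIdx m q = classIdx m p := by
  obtain ⟨hs, hd⟩ := h
  unfold classIdx
  refine Prod.ext (Fin.ext ?_) ?_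
  · exact kcan_eq_of_pm hd
  · rcases hs with ⟨h1, h2⟩ | ⟨h1, h2⟩
    · rw [h1, h2]
    · rw [h1, h2, sgn_comm]

/-- Representative pair of a class index. -/
def classRep (m : ℕ) (kj : Fin (m + 1) × Fin 3) : DPair m :=
  ((0, (sgp kj.2).1), (((kj.1 : ℕ) : ZMod (2 * m + 1)), (sgp kj.2).2))

lemma Pinv_classRep (p : DPair m) : Pinv m (classRep m (classIdx m p)) p := by
  constructor
  · show (p.1.2 = (sgp (sgn p.1.2 p.2.2)).1 ∧ p.2.2 = (sgp (sgn p.1.2 p.2.2)).2) ∨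
      (p.1.2 = (sgp (sgn p.1.2 p.2.2)).2 ∧ p.2.2 = (sgp (sgn p.1.2 p.2.2)).1)
    cases h1 : p.1.2 <;> cases h2 : p.2.2 <;> simp [sgn, sgp]
  · show p.2.1 - p.1.1 = ((kcan m (p.2.1 - p.1.1) : ℕ) : ZMod (2 * m + 1)) - 0 ∨
      p.2.1 - p.1.1 = -(((kcan m (p.2.1 - p.1.1) : ℕ) : ZMod (2 * m + 1)) - 0)
    rw [sub_zero]
    rcases kcan_spec (p.2.1 - p.1.1) with h | h
    · exact Or.inl h.symm
    · exact Or.inr (by rw [h, neg_neg])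

lemma classIdx_classRep (kj : Fin (m + 1) × Fin 3) : classIdx m (classRep m kj) = kj := by
  unfold classIdx classRep
  refine Prod.ext (Fin.ext ?_) ?_
  · show kcan m (((kj.1 : ℕ) : ZMod (2 * m + 1)) - 0) = (kj.1 : ℕ)
    rw [sub_zero, kcan_cast (Nat.lt_succ_iff.mp kj.1.isLt)]
  · exact sgn_sgp kj.2

/-- The explicit bijection between the quotient and `Fin (m+1) × Fin 3`. -/
def classEquiv (m : ℕ) :
    ((dihedral (2 * m + 1)).double).TensorTau ≃ Fin (m + 1) × Fin 3 where
  toFun := Quotient.lift (classIdx m)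
    (fun p q h => (classIdx_eq_of_Pinv ((eqv_iff_Pinv p q).1 h)).symm)
  invFun := fun kj => Quotient.mk _ (classRep m kj)
  left_inv := by
    refine Quotient.ind ?_
    intro p
    exact Quotient.sound ((eqv_iff_Pinv _ _).2 (Pinv_classRep p))
  right_inv := fun kj => classIdx_classRep kj

end Statement11Count
/-- for `n = 2m+1`, the quotient `D(R_n) ⊗ D(R_n) / ⟨τ⟩` has exactly
`3(m+1)` elements, namely `E(k)^{+,+}`, `E(k)^{−,−}` and
`E(k)^{+,−} ∪ E(k)^{−,+}` for `k = 0, …, m`. -/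
theorem statement11 (m : ℕ) :
    ({S : Set ((ZMod (2 * m + 1) × Bool) × (ZMod (2 * m + 1) × Bool)) |
        ∃ p, S = {q | ((dihedral (2 * m + 1)).double).tensorTauEqv p q}} =
      {S | ∃ k ≤ m,
        S = EsetD (2 * m + 1) k true true ∨
        S = EsetD (2 * m + 1) k false false ∨
        S = EsetD (2 * m + 1) k true false ∪ EsetD (2 * m + 1) k false true}) ∧
    Nat.card (((dihedral (2 * m + 1)).double).TensorTau) = 3 * (m + 1) := by
  constructor
  · ext S
    simp only [Set.mem_setOf_eq]
    constructor
    · rintro ⟨p, rfl⟩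
      obtain ⟨⟨x, ε⟩, ⟨y, δ⟩⟩ := p
      refine ⟨kcan m (y - x), kcan_le _, ?_⟩
      have hcl := class_eq x y ε δ (kcan m (y - x)) (kcan_spec (y - x))
      cases ε <;> cases δ
      · exact Or.inr (Or.inl (hcl.trans (Set.union_self _)))
      · exact Or.inr (Or.inr (hcl.trans (Set.union_comm _ _)))
      · exact Or.inr (Or.inr hcl)
      · exact Or.inl (hcl.trans (Set.union_self _))
    · rintro ⟨k, hk, hS | hS | hS⟩
      · refine ⟨((0, true), ((k : ZMod (2 * m + 1)), true)), ?_⟩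
        rw [hS, class_eq 0 (k : ZMod (2*m+1)) true true k (Or.inl (sub_zero _).symm),
          Set.union_self]
      · refine ⟨((0, false), ((k : ZMod (2 * m + 1)), false)), ?_⟩
        rw [hS, class_eq 0 (k : ZMod (2*m+1)) false false k (Or.inl (sub_zero _).symm),
          Set.union_self]
      · refine ⟨((0, true), ((k : ZMod (2 * m + 1)), false)), ?_⟩
        rw [hS, class_eq 0 (k : ZMod (2*m+1)) true false k (Or.inl (sub_zero _).symm)]
  · rw [Nat.card_congr (classEquiv m)]
    simp [Nat.card_eq_fintype_card]
    ring
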